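/- For every φ ∈ (0, π/2), X, T, ρ ∈ ℝ and every fixed x ∈ ℝ, lim_{t → −∞} e^{−Σ(φ)(t−T)} · ( e^{−2it − iρ + 2iφ} A(x,t; φ, X, T, ρ) − 1 ) = 2 sin(2φ) e^{iφ} cos(K(φ)(x−X)). (This is the matching of the breather, in the intermediate time region, with an exponentially growing sinusoidal solution of the linearized theory.) -/

import Mathlib

open Complex

/-- Wave number `K(φ) = 2 cos φ`. -/
noncomputable def Kfreq (φ : ℝ) : ℝ := 2 * Real.cos φ

/-- Growth rate `Σ(φ) = 2 sin(2φ)`. -/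
noncomputable def Sfreq (φ : ℝ) : ℝ := 2 * Real.sin (2 * φ)

/-- The Akhmediev one-breather `A(x,t; φ, X, T, ρ)`. -/
noncomputable def akhmediev (φ X T ρ : ℝ) (x t : ℝ) : ℂ :=
  Complex.exp (2 * (t : ℂ) * Complex.I + (ρ : ℂ) * Complex.I) *
    (Complex.cosh ((Sfreq φ * (t - T) : ℝ) + 2 * (φ : ℂ) * Complex.I)
      + (Real.sin φ : ℂ) * (Real.cos (Kfreq φ * (x - X)) : ℂ)) /
    (Complex.cosh ((Sfreq φ * (t - T) : ℝ))
      - (Real.sin φ : ℂ) * (Real.cos (Kfreq φ * (x - X)) : ℂ))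

/-!
Put `s = Σ(φ)(t - T)`, `ω = e^{2iφ}` and `c = sin φ cos(K(φ)(x - X))`; after removing the phase,
the breather is `ω (cosh(s + 2iφ) + c) / (cosh s - c)`. The identity
`ω cosh(s + 2iφ) - cosh s = eˢ (ω² - 1) / 2` rewrites `e^{-s} (· - 1)` as
`(ω² - 1) / 2 / (cosh s - c) + c (ω + 1) e^{-s} / (cosh s - c)`. As `s → -∞` the first term
vanishes and `e^{-s} / (cosh s - c) → 2`, so the limit is
`2c(ω + 1) = 2 sin 2φ e^{iφ} cos(K(φ)(x - X))`.
-/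

open Filter Topology

lemma Real.tendsto_cosh_sub_atBot (c : ℝ) : Tendsto (fun s => Real.cosh s - c) atBot atTop := by
  refine tendsto_atTop_add_const_right _ (-c)
    (tendsto_atTop_mono (f := fun s => Real.exp (-s) / 2) ?_ ?_)
  · intro s
    rw [Real.cosh_eq]
    linarith [Real.exp_pos s]
  · exact (Real.tendsto_exp_atTop.comp tendsto_neg_atBot_atTop).atTop_div_const two_pos

lemma Real.tendsto_cosh_sub_mul_exp_atBot (c : ℝ) :
    Tendsto (fun s => (Real.cosh s - c) * Real.exp s) atBot (𝓝 (1 / 2)) := by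
  have h := Real.tendsto_exp_atBot
  have hlim := (((h.mul h).add_const 1).div_const 2).sub (h.const_mul c)
  norm_num at hlim
  refine hlim.congr fun s => ?_
  rw [Real.cosh_eq, Real.exp_neg]
  field_simp

lemma Complex.exp_mul_cosh_add_sub_cosh (s a : ℂ) :
    exp a * cosh (s + a) - cosh s = exp s * (exp (2 * a) - 1) / 2 := by
  simp only [Complex.cosh, neg_add, exp_add, exp_neg, two_mul]
  field_simp
  ring

lemma Complex.exp_two_mul_mul_I_add_one (z : ℂ) :
    exp (2 * z * I) + 1 = 2 * exp (z * I) * cos z := by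
  rw [Complex.cos, show 2 * z * I = z * I + z * I by ring, exp_add, neg_mul, exp_neg]
  field_simp

noncomputable def breatherProfile (a c s : ℂ) : ℂ := exp a * (cosh (s + a) + c) / (cosh s - c)

lemma exp_neg_mul_breatherProfile_sub_one {a c s : ℂ} (hD : cosh s - c ≠ 0) :
    exp (-s) * (breatherProfile a c s - 1)
      = (exp (2 * a) - 1) / 2 * (cosh s - c)⁻¹ + c * (exp a + 1) * ((cosh s - c) * exp s)⁻¹ := by
  have key := exp_mul_cosh_add_sub_cosh s a
  generalize exp (2 * a) = w at key ⊢
  rw [breatherProfile, exp_neg]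
  field_simp
  linear_combination 2 * key

lemma tendsto_exp_neg_mul_breatherProfile_sub_one (a : ℂ) (c : ℝ) :
    Tendsto (fun s : ℝ => exp (-s) * (breatherProfile a c s - 1))
      atBot (𝓝 (2 * c * (exp a + 1))) := by
  have hD := Real.tendsto_cosh_sub_atBot c
  have h_inv : Tendsto (fun s : ℝ => (cosh s - c)⁻¹) atBot (𝓝 0) := by
    simpa using hD.inv_tendsto_atTop.ofReal
  have h_ratio : Tendsto (fun s : ℝ => ((cosh s - c) * exp s)⁻¹) atBot (𝓝 2) := by
    simpa using ((Real.tendsto_cosh_sub_mul_exp_atBot c).inv₀ (by norm_num)).ofReal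
  rw [show (2 * c * (exp a + 1) : ℂ) = (exp (2 * a) - 1) / 2 * 0 + c * (exp a + 1) * 2 by ring]
  have hlim := (h_inv.const_mul ((exp (2 * a) - 1) / 2)).add
    (h_ratio.const_mul (c * (exp a + 1)))
  refine hlim.congr' ?_
  filter_upwards [hD.eventually_gt_atTop 0] with s hs
  refine (exp_neg_mul_breatherProfile_sub_one ?_).symm
  exact_mod_cast hs.ne'

lemma Sfreq_pos {φ : ℝ} (hφ0 : 0 < φ) (hφ1 : φ < Real.pi / 2) : 0 < Sfreq φ :=
  mul_pos two_pos (Real.sin_pos_of_pos_of_lt_pi (by linarith) (by linarith))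

lemma exp_phase_mul_akhmediev (φ X T ρ x t : ℝ) :
    exp (-(2 * (t : ℂ) * I) - (ρ : ℂ) * I + 2 * (φ : ℂ) * I) * akhmediev φ X T ρ x t
      = breatherProfile (2 * φ * I) (Real.sin φ * Real.cos (Kfreq φ * (x - X)) : ℝ)
          (Sfreq φ * (t - T) : ℝ) := by
  rw [akhmediev, breatherProfile, ← mul_div_assoc, ← mul_assoc, ← exp_add]
  push_cast
  ring_nf

/-- for every fixed `x`,
`lim_{t → −∞} e^{−Σ(φ)(t−T)} ( e^{−2it − iρ + 2iφ} A(x,t) − 1 )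
  = 2 sin(2φ) e^{iφ} cos(K(φ)(x−X))`,
the matching of the breather with an exponentially growing sinusoidal solution of the
linearized theory in the intermediate time region. -/
theorem akhmediev_matching_linear (φ X T ρ : ℝ) (hφ0 : 0 < φ) (hφ1 : φ < Real.pi / 2)
    (x : ℝ) :
    Filter.Tendsto
      (fun t : ℝ =>
        Complex.exp (-((Sfreq φ * (t - T) : ℝ) : ℂ)) *
          (Complex.exp (-(2 * (t : ℂ) * Complex.I) - (ρ : ℂ) * Complex.I
              + 2 * (φ : ℂ) * Complex.I) * akhmediev φ X T ρ x t - 1))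
      Filter.atBot
      (nhds (((2 * Real.sin (2 * φ) : ℝ) : ℂ) * Complex.exp ((φ : ℂ) * Complex.I)
        * ((Real.cos (Kfreq φ * (x - X)) : ℝ) : ℂ))) := by
  set c := Real.sin φ * Real.cos (Kfreq φ * (x - X))
  have hs : Tendsto (fun t => Sfreq φ * (t - T)) atBot atBot :=
    (tendsto_atBot_add_const_right _ (-T) tendsto_id).const_mul_atBot (Sfreq_pos hφ0 hφ1)
  have hlim := (tendsto_exp_neg_mul_breatherProfile_sub_one (2 * φ * I) c).comp hs
  have hvalue : 2 * (c : ℂ) * (exp (2 * φ * I) + 1)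
      = ((2 * Real.sin (2 * φ) : ℝ) : ℂ) * exp (φ * I) * (Real.cos (Kfreq φ * (x - X)) : ℝ) := by
    rw [exp_two_mul_mul_I_add_one, ← ofReal_cos, Real.sin_two_mul]
    push_cast [c]
    ring
  rw [hvalue] at hlim
  simpa only [Function.comp_def, exp_phase_mul_akhmediev] using hlim
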